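/- For complex q with 0<|q|<1, ∑_{i,j≥0} q^{((i-j)^2+i)/2} / ((q;q)_i (q;q)_j) = 1/(q^{1/2};q)_∞^2, where q^{1/2} is a fixed square root of q. -/

import Mathlib

/-!
Summing first over `i`, Euler's identity `∑ q^(n choose 2) x^n / (q;q)_n = (-x;q)_∞` at
`x = q^(1-j)` turns the inner sum into `(-q;q)_∞ (-1;q)_j r^j / (q;q)_j`. The remaining sum over `j`
is the `q`-binomial theorem `∑ (a;q)_n x^n / (q;q)_n = (ax;q)_∞ / (x;q)_∞` at `a = -1`, `x = r`, so
the double sum is `(-q;q)_∞ (-r;q)_∞ / (r;q)_∞`. Finally `(r;q)_∞ (-r;q)_∞ = (q;q²)_∞` and Euler's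
`(-q;q)_∞ (q;q²)_∞ = 1`. Both series identities follow from one argument: a power series whose
coefficients satisfy `c (n+1) (1 - q^(n+1)) = (b - a q^n) c n` obeys
`(1 - b y) f y = (1 - a y) f (q y)`, and iterating this functional equation gives
`(bx;q)_∞ f x = (ax;q)_∞`.
-/

open scoped BigOperators

noncomputable def qPoch (a q : ℂ) (n : ℕ) : ℂ :=
  ∏ k ∈ Finset.range n, (1 - a * q ^ k)

noncomputable def qPochInf (a q : ℂ) : ℂ :=
  ∏' k : ℕ, (1 - a * q ^ k)

open Filter Finset Topology

section QPochhammer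

variable {a q : ℂ}

lemma norm_sq_lt_one (hq : ‖q‖ < 1) : ‖q ^ 2‖ < 1 := by
  simpa [norm_pow] using pow_lt_one₀ (norm_nonneg q) hq two_ne_zero

lemma qPoch_succ (a q : ℂ) (n : ℕ) : qPoch a q (n + 1) = qPoch a q n * (1 - a * q ^ n) :=
  prod_range_succ _ _

lemma qPochInf_zero (q : ℂ) : qPochInf 0 q = 1 := by
  simp [qPochInf]

lemma summable_norm_mul_pow (a : ℂ) (hq : ‖q‖ < 1) : Summable fun k : ℕ ↦ ‖a * q ^ k‖ := by
  simpa [norm_mul, norm_pow] using (summable_geometric_of_lt_one (norm_nonneg q) hq).mul_left ‖a‖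

lemma multipliable_one_sub_mul_pow (a : ℂ) (hq : ‖q‖ < 1) :
    Multipliable fun k : ℕ ↦ 1 - a * q ^ k := by
  simpa [sub_eq_add_neg] using
    multipliable_one_add_of_summable (f := fun k ↦ -(a * q ^ k))
      (by simpa using summable_norm_mul_pow a hq)

lemma one_sub_mul_pow_ne_zero (ha : ‖a‖ < 1) (hq : ‖q‖ ≤ 1) (k : ℕ) : 1 - a * q ^ k ≠ 0 := by
  have hlt : ‖a * q ^ k‖ < 1 := by
    rw [norm_mul, norm_pow]
    exact mul_lt_one_of_nonneg_of_lt_one_left (norm_nonneg a) ha (pow_le_one₀ (norm_nonneg q) hq)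
  exact sub_ne_zero.2 fun h ↦ by simp [← h] at hlt

lemma qPoch_ne_zero (ha : ‖a‖ < 1) (hq : ‖q‖ ≤ 1) (n : ℕ) : qPoch a q n ≠ 0 :=
  prod_ne_zero_iff.2 fun k _ ↦ one_sub_mul_pow_ne_zero ha hq k

lemma qPochInf_ne_zero (ha : ‖a‖ < 1) (hq : ‖q‖ < 1) : qPochInf a q ≠ 0 := by
  simpa [qPochInf, sub_eq_add_neg] using
    tprod_one_add_ne_zero_of_summable (f := fun k ↦ -(a * q ^ k))
    (fun k ↦ by simpa [← sub_eq_add_neg] using one_sub_mul_pow_ne_zero ha hq.le k)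
    (by simpa using summable_norm_mul_pow a hq)

lemma tendsto_qPoch (a : ℂ) (hq : ‖q‖ < 1) : Tendsto (qPoch a q) atTop (𝓝 (qPochInf a q)) :=
  (multipliable_one_sub_mul_pow a hq).hasProd.tendsto_prod_nat

lemma qPochInf_eq_one_sub_mul (a : ℂ) (hq : ‖q‖ < 1) :
    qPochInf a q = (1 - a) * qPochInf (a * q) q := by
  have hshift : (fun k : ℕ ↦ 1 - a * q ^ (k + 1)) = fun k ↦ 1 - a * q * q ^ k := by
    ext k; ring
  unfold qPochInf
  rw [tprod_eq_zero_mul' (hshift ▸ multipliable_one_sub_mul_pow (a * q) hq), hshift, pow_zero,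
    mul_one]

lemma qPochInf_mul_qPochInf_neg (a : ℂ) (hq : ‖q‖ < 1) :
    qPochInf a q * qPochInf (-a) q = qPochInf (a ^ 2) (q ^ 2) := by
  rw [qPochInf, qPochInf, ← (multipliable_one_sub_mul_pow a hq).tprod_mul
    (multipliable_one_sub_mul_pow (-a) hq)]
  exact tprod_congr fun k ↦ by ring

lemma qPochInf_sq_mul_qPochInf_mul (a : ℂ) (hq : ‖q‖ < 1) :
    qPochInf a (q ^ 2) * qPochInf (a * q) (q ^ 2) = qPochInf a q := by
  have hq2 := norm_sq_lt_one hq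
  have heven : (fun k : ℕ ↦ 1 - a * q ^ (2 * k)) = fun k ↦ 1 - a * (q ^ 2) ^ k := by
    ext k; ring
  have hodd : (fun k : ℕ ↦ 1 - a * q ^ (2 * k + 1)) = fun k ↦ 1 - a * q * (q ^ 2) ^ k := by
    ext k; ring
  have hsplit := tprod_even_mul_odd (f := fun k ↦ 1 - a * q ^ k)
    (heven ▸ multipliable_one_sub_mul_pow a hq2) (hodd ▸ multipliable_one_sub_mul_pow (a * q) hq2)
  rwa [heven, hodd] at hsplit

lemma exists_norm_inv_qPoch_le (hq : ‖q‖ < 1) : ∃ C, ∀ n, ‖(qPoch q q n)⁻¹‖ ≤ C := by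
  obtain ⟨C, hC⟩ := ((tendsto_qPoch q hq).inv₀ (qPochInf_ne_zero hq hq)).norm.bddAbove_range
  exact ⟨C, fun n ↦ hC ⟨n, rfl⟩⟩

lemma qPochInf_neg_self_mul_qPochInf_sq (hq : ‖q‖ < 1) :
    qPochInf (-q) q * qPochInf q (q ^ 2) = 1 := by
  have hq2 := norm_sq_lt_one hq
  apply mul_right_cancel₀ (qPochInf_ne_zero hq2 hq2)
  have hsplit := qPochInf_sq_mul_qPochInf_mul q hq
  rw [← sq] at hsplit
  rw [one_mul, mul_assoc, hsplit, mul_comm, qPochInf_mul_qPochInf_neg q hq]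

end QPochhammer

section RecursiveCoefficients

variable {a b q x : ℂ} {c : ℕ → ℂ}

lemma summable_norm_mul_pow_of_coeff_succ (hq : ‖q‖ < 1)
    (hc : ∀ n, c (n + 1) * (1 - q ^ (n + 1)) = (b - a * q ^ n) * c n) (hx : ‖b‖ * ‖x‖ < 1) :
    Summable fun n ↦ ‖c n‖ * ‖x‖ ^ n := by
  set ρ := (1 + ‖b‖ * ‖x‖) / 2 with hρ
  have hgap : Tendsto (fun n : ℕ ↦ ρ * (1 - ‖q‖ ^ (n + 1)) - (‖b‖ + ‖a‖ * ‖q‖ ^ n) * ‖x‖) atTop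
      (𝓝 (ρ * (1 - 0) - (‖b‖ + ‖a‖ * 0) * ‖x‖)) := by
    have hpow := tendsto_pow_atTop_nhds_zero_of_lt_one (norm_nonneg q) hq
    exact ((tendsto_const_nhds.sub (hpow.comp (tendsto_add_atTop_nat 1))).const_mul ρ).sub
      ((tendsto_const_nhds.add (hpow.const_mul _)).mul_const _)
  have hpos : ∀ᶠ n in atTop, 0 < ρ * (1 - ‖q‖ ^ (n + 1)) - (‖b‖ + ‖a‖ * ‖q‖ ^ n) * ‖x‖ :=
    hgap.eventually_const_lt (by simp only [sub_zero, mul_zero, add_zero, mul_one]; linarith)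
  refine summable_of_ratio_norm_eventually_le (r := ρ) (by rw [hρ]; linarith) ?_
  filter_upwards [hpos] with n hn
  have hqn : ‖q‖ ^ (n + 1) < 1 := pow_lt_one₀ (norm_nonneg q) hq n.succ_ne_zero
  have hstep : ‖c (n + 1)‖ * (1 - ‖q‖ ^ (n + 1)) ≤ (‖b‖ + ‖a‖ * ‖q‖ ^ n) * ‖c n‖ := by
    calc ‖c (n + 1)‖ * (1 - ‖q‖ ^ (n + 1)) ≤ ‖c (n + 1) * (1 - q ^ (n + 1))‖ := by
          rw [norm_mul]
          gcongr
          simpa [norm_pow] using norm_sub_norm_le (1 : ℂ) (q ^ (n + 1))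
      _ = ‖b - a * q ^ n‖ * ‖c n‖ := by rw [hc, norm_mul]
      _ ≤ (‖b‖ + ‖a‖ * ‖q‖ ^ n) * ‖c n‖ := by
          gcongr
          simpa [norm_mul, norm_pow] using norm_sub_le b (a * q ^ n)
  have hratio : ‖c (n + 1)‖ * ‖x‖ ≤ ρ * ‖c n‖ := by
    refine le_of_mul_le_mul_right ?_ (sub_pos.2 hqn)
    nlinarith [norm_nonneg x, norm_nonneg (c n)]
  simp only [norm_mul, norm_norm, norm_pow, pow_succ]
  nlinarith [pow_nonneg (norm_nonneg x) n]

lemma one_sub_mul_mul_tsum_eq_of_coeff_succ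
    (hc : ∀ n, c (n + 1) * (1 - q ^ (n + 1)) = (b - a * q ^ n) * c n) {y : ℂ}
    (hy : Summable fun n ↦ c n * y ^ n) (hqy : Summable fun n ↦ c n * (q * y) ^ n) :
    (1 - b * y) * ∑' n, c n * y ^ n = (1 - a * y) * ∑' n, c n * (q * y) ^ n := by
  have hshift : ∀ n, c (n + 1) * y ^ (n + 1) - c (n + 1) * (q * y) ^ (n + 1)
      = y * (b * (c n * y ^ n) - a * (c n * (q * y) ^ n)) := fun n ↦ by
    linear_combination y ^ (n + 1) * hc n
  have hdiff : ∑' n, c n * y ^ n - ∑' n, c n * (q * y) ^ n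
      = y * (b * ∑' n, c n * y ^ n - a * ∑' n, c n * (q * y) ^ n) := by
    rw [← hy.tsum_sub hqy, (hy.sub hqy).tsum_eq_zero_add]
    simp only [hshift, tsum_mul_left, pow_zero, mul_one, sub_self, zero_add]
    rw [(hy.mul_left b).tsum_sub (hqy.mul_left a), tsum_mul_left, tsum_mul_left]
  linear_combination hdiff

lemma tendsto_tsum_mul_pow_mul_geom (hq : ‖q‖ < 1) (hs : Summable fun n ↦ ‖c n‖ * ‖x‖ ^ n) :
    Tendsto (fun N : ℕ ↦ ∑' n, c n * (q ^ N * x) ^ n) atTop (𝓝 (c 0)) := by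
  have hcont : ContinuousOn (fun y ↦ ∑' n, c n * y ^ n) (Metric.closedBall 0 ‖x‖) :=
    continuousOn_tsum (fun n ↦ by fun_prop) hs fun n y hy ↦ by
      rw [norm_mul, norm_pow]
      gcongr
      simpa using hy
  have hzero : ∑' n, c n * (0 : ℂ) ^ n = c 0 := by
    rw [tsum_eq_single 0 fun n hn ↦ by simp [hn]]
    simp
  have hgeom : Tendsto (fun N : ℕ ↦ q ^ N * x) atTop (𝓝[Metric.closedBall 0 ‖x‖] 0) := by
    refine tendsto_nhdsWithin_iff.2 ⟨?_, Eventually.of_forall fun N ↦ ?_⟩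
    · simpa using (tendsto_pow_atTop_nhds_zero_of_norm_lt_one hq).mul_const x
    · simpa [norm_mul, norm_pow] using
        mul_le_of_le_one_left (norm_nonneg x) (pow_le_one₀ (norm_nonneg q) hq.le)
  have h := (hcont 0 (Metric.mem_closedBall_self (norm_nonneg x))).tendsto.comp hgeom
  rwa [hzero] at h

theorem qPochInf_mul_tsum_eq_of_coeff_succ (hq : ‖q‖ < 1)
    (hc : ∀ n, c (n + 1) * (1 - q ^ (n + 1)) = (b - a * q ^ n) * c n) (hc0 : c 0 = 1)
    (hx : ‖b‖ * ‖x‖ < 1) :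
    qPochInf (b * x) q * ∑' n, c n * x ^ n = qPochInf (a * x) q := by
  have hs := summable_norm_mul_pow_of_coeff_succ hq hc hx
  have hsmall : ∀ N : ℕ, ‖q ^ N * x‖ ≤ ‖x‖ := fun N ↦ by
    simpa [norm_mul, norm_pow] using
      mul_le_of_le_one_left (norm_nonneg x) (pow_le_one₀ (norm_nonneg q) hq.le)
  have hsummable : ∀ N : ℕ, Summable fun n ↦ c n * (q ^ N * x) ^ n := fun N ↦
    hs.of_norm_bounded fun n ↦ by
      rw [norm_mul, norm_pow]
      gcongr
      exact hsmall N
  have hiter : ∀ N : ℕ, qPoch (b * x) q N * ∑' n, c n * x ^ n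
      = qPoch (a * x) q N * ∑' n, c n * (q ^ N * x) ^ n := by
    intro N
    induction N with
    | zero => simp [qPoch]
    | succ N ih =>
      have hfun := one_sub_mul_mul_tsum_eq_of_coeff_succ hc (hsummable N)
        (by simpa only [← mul_assoc, ← pow_succ'] using hsummable (N + 1))
      simp only [← mul_assoc, ← pow_succ'] at hfun
      rw [qPoch_succ, qPoch_succ]
      linear_combination (1 - b * x * q ^ N) * ih + qPoch (a * x) q N * hfun
  refine tendsto_nhds_unique ((tendsto_qPoch (b * x) hq).mul_const _) ?_
  simpa [hc0, hiter] using (tendsto_qPoch (a * x) hq).mul (tendsto_tsum_mul_pow_mul_geom hq hs)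

end RecursiveCoefficients

section Euler

variable {q : ℂ}

theorem tsum_pow_choose_two_div_qPoch_mul_pow (hq : ‖q‖ < 1) (x : ℂ) :
    ∑' n, q ^ n.choose 2 / qPoch q q n * x ^ n = qPochInf (-x) q := by
  have hc : ∀ n, q ^ (n + 1).choose 2 / qPoch q q (n + 1) * (1 - q ^ (n + 1))
      = (0 - (-1) * q ^ n) * (q ^ n.choose 2 / qPoch q q n) := fun n ↦ by
    have hne := one_sub_mul_pow_ne_zero hq hq.le n
    rw [← pow_succ'] at hne
    rw [qPoch_succ, ← pow_succ', Nat.choose_succ_succ', Nat.choose_one_right, pow_add]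
    field_simp [qPoch_ne_zero hq hq.le n]
    ring
  simpa [qPochInf_zero] using qPochInf_mul_tsum_eq_of_coeff_succ
    (c := fun n ↦ q ^ n.choose 2 / qPoch q q n) (x := x) hq hc (by simp [qPoch]) (by simp)

theorem qPochInf_mul_tsum_qPoch_div_qPoch_mul_pow (a : ℂ) (hq : ‖q‖ < 1) {x : ℂ} (hx : ‖x‖ < 1) :
    qPochInf x q * ∑' n, qPoch a q n / qPoch q q n * x ^ n = qPochInf (a * x) q := by
  have hc : ∀ n, qPoch a q (n + 1) / qPoch q q (n + 1) * (1 - q ^ (n + 1))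
      = (1 - a * q ^ n) * (qPoch a q n / qPoch q q n) := fun n ↦ by
    have hne := one_sub_mul_pow_ne_zero hq hq.le n
    rw [← pow_succ'] at hne
    rw [qPoch_succ, qPoch_succ, ← pow_succ']
    field_simp [qPoch_ne_zero hq hq.le n]
  simpa using qPochInf_mul_tsum_eq_of_coeff_succ (c := fun n ↦ qPoch a q n / qPoch q q n)
    (b := 1) hq hc (by simp [qPoch]) (by simpa using hx)

end Euler

section SquareRoot

variable {r : ℂ}

lemma zpow_sub_sq_add_eq (hr0 : r ≠ 0) (i j : ℕ) :
    r ^ (((i : ℤ) - j) ^ 2 + i)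
      = r ^ (j ^ 2) * ((r ^ 2) ^ i.choose 2 * (r ^ 2 / r ^ (2 * j)) ^ i) := by
  have hdiv : r ^ 2 / r ^ (2 * j) = r ^ (2 - 2 * (j : ℤ)) := by
    rw [zpow_sub₀ hr0]
    norm_cast
  rw [hdiv, ← pow_mul, ← zpow_natCast (r ^ _) i, ← zpow_mul, ← zpow_natCast r (j ^ 2),
    ← zpow_natCast r (2 * _), ← zpow_add₀ hr0, ← zpow_add₀ hr0]
  congr 1
  have h := Nat.cast_choose_two ℚ i
  qify
  rw [h]
  ring

lemma pow_sq_mul_qPochInf_neg_div_pow (hq : ‖r ^ 2‖ < 1) (hr0 : r ≠ 0) (j : ℕ) :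
    r ^ (j ^ 2) * qPochInf (-(r ^ 2 / r ^ (2 * j))) (r ^ 2)
      = r ^ j * qPoch (-1) (r ^ 2) j * qPochInf (-r ^ 2) (r ^ 2) := by
  induction j with
  | zero => simp [qPoch]
  | succ j ih =>
    have hshift : -(r ^ 2 / r ^ (2 * (j + 1))) * r ^ 2 = -(r ^ 2 / r ^ (2 * j)) := by
      field_simp
      ring
    rw [qPochInf_eq_one_sub_mul _ hq, hshift, qPoch_succ]
    have hpow : r ^ ((j + 1) ^ 2) * (1 - -(r ^ 2 / r ^ (2 * (j + 1))))
        = r * (1 - -1 * (r ^ 2) ^ j) * r ^ (j ^ 2) := by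
      field_simp
      ring
    linear_combination (r * (1 - -1 * (r ^ 2) ^ j)) * ih
      + qPochInf (-(r ^ 2 / r ^ (2 * j))) (r ^ 2) * hpow

lemma norm_zpow_sub_sq_add_le (hr : ‖r‖ ≤ 1) (i j : ℕ) :
    ‖r ^ (((i : ℤ) - j) ^ 2 + i)‖ ≤ √‖r‖ ^ i * √‖r‖ ^ j := by
  set d := ((i : ℤ) - j).natAbs
  have hexp : ((i : ℤ) - j) ^ 2 + i = ((d ^ 2 + i : ℕ) : ℤ) := by
    push_cast
    rw [Int.natAbs_sq]
  have hdeg : i + j ≤ 2 * (d ^ 2 + i) := by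
    have hd : j ≤ i + d := by omega
    have := Nat.le_self_pow two_ne_zero d
    omega
  rw [hexp, zpow_natCast, norm_pow, ← pow_add]
  calc ‖r‖ ^ (d ^ 2 + i) = √‖r‖ ^ (2 * (d ^ 2 + i)) := by
        rw [pow_mul, Real.sq_sqrt (norm_nonneg r)]
    _ ≤ √‖r‖ ^ (i + j) := pow_le_pow_of_le_one (Real.sqrt_nonneg _) (Real.sqrt_le_one.2 hr) hdeg

lemma summable_zpow_sub_sq_add_div_qPoch_mul_qPoch (hr : ‖r‖ < 1) :
    Summable fun p : ℕ × ℕ ↦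
      r ^ (((p.1 : ℤ) - p.2) ^ 2 + p.1)
        / (qPoch (r ^ 2) (r ^ 2) p.1 * qPoch (r ^ 2) (r ^ 2) p.2) := by
  obtain ⟨C, hC⟩ := exists_norm_inv_qPoch_le (norm_sq_lt_one hr)
  have hs : √‖r‖ < 1 := (Real.sqrt_lt' one_pos).2 (by simpa using hr)
  have hgeom := summable_geometric_of_lt_one (Real.sqrt_nonneg ‖r‖) hs
  refine Summable.of_norm_bounded ((hgeom.mul_of_nonneg hgeom (fun _ ↦ by positivity)
    (fun _ ↦ by positivity)).mul_left (C * C)) fun ⟨i, j⟩ ↦ ?_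
  rw [div_eq_mul_inv, mul_inv, norm_mul, norm_mul]
  calc ‖r ^ (((i : ℤ) - j) ^ 2 + i)‖
        * (‖(qPoch (r ^ 2) (r ^ 2) i)⁻¹‖ * ‖(qPoch (r ^ 2) (r ^ 2) j)⁻¹‖)
      ≤ (√‖r‖ ^ i * √‖r‖ ^ j) * (C * C) := by
        gcongr
        · exact norm_zpow_sub_sq_add_le hr.le i j
        · exact (norm_nonneg _).trans (hC i)
        · exact hC i
        · exact hC j
    _ = C * C * (√‖r‖ ^ i * √‖r‖ ^ j) := mul_comm _ _

lemma tsum_zpow_sub_sq_add_div_qPoch_mul_qPoch (hq : ‖r ^ 2‖ < 1) (hr0 : r ≠ 0) (j : ℕ) :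
    ∑' i : ℕ, r ^ (((i : ℤ) - j) ^ 2 + i) / (qPoch (r ^ 2) (r ^ 2) i * qPoch (r ^ 2) (r ^ 2) j)
      = qPochInf (-r ^ 2) (r ^ 2) * (qPoch (-1) (r ^ 2) j / qPoch (r ^ 2) (r ^ 2) j * r ^ j) := by
  have hterm : ∀ i : ℕ,
      r ^ (((i : ℤ) - j) ^ 2 + i) / (qPoch (r ^ 2) (r ^ 2) i * qPoch (r ^ 2) (r ^ 2) j)
        = r ^ (j ^ 2) / qPoch (r ^ 2) (r ^ 2) j
        * ((r ^ 2) ^ i.choose 2 / qPoch (r ^ 2) (r ^ 2) i * (r ^ 2 / r ^ (2 * j)) ^ i) := fun i ↦ by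
    rw [zpow_sub_sq_add_eq hr0]
    ring
  rw [tsum_congr hterm, tsum_mul_left, tsum_pow_choose_two_div_qPoch_mul_pow hq,
    div_mul_eq_mul_div, pow_sq_mul_qPochInf_neg_div_pow hq hr0]
  ring

end SquareRoot

theorem stmt_2 (q r : ℂ) (hq0 : q ≠ 0) (hq : ‖q‖ < 1) (hr : r ^ 2 = q) :
    ∑' p : ℕ × ℕ,
      r ^ ((((p.1 : ℤ) - p.2) ^ 2 + p.1)) /
        (qPoch q q p.1 * qPoch q q p.2)
      = 1 / (qPochInf r q) ^ 2 := by
  subst hr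
  have hr0 : r ≠ 0 := by rintro rfl; simp at hq0
  have hr : ‖r‖ < 1 := by
    rw [norm_pow] at hq
    exact (pow_lt_one_iff_of_nonneg (norm_nonneg r) two_ne_zero).1 hq
  have hsum := summable_zpow_sub_sq_add_div_qPoch_mul_qPoch hr
  have hbinomial := qPochInf_mul_tsum_qPoch_div_qPoch_mul_pow (-1) hq hr
  rw [neg_one_mul] at hbinomial
  have hproduct := qPochInf_mul_qPochInf_neg r hq
  have heuler := qPochInf_neg_self_mul_qPochInf_sq hq
  rw [← (Equiv.prodComm ℕ ℕ).tsum_eq, Equiv.coe_prodComm, hsum.prod_symm.tsum_prod]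
  simp only [Prod.fst_swap, Prod.snd_swap, tsum_zpow_sub_sq_add_div_qPoch_mul_qPoch hq hr0]
  rw [tsum_mul_left, eq_div_iff (pow_ne_zero 2 (qPochInf_ne_zero hr hq))]
  linear_combination (qPochInf (-r ^ 2) (r ^ 2) * qPochInf r (r ^ 2)) * hbinomial
    + qPochInf (-r ^ 2) (r ^ 2) * hproduct + heuler
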